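/- Let Σ and Σ̂ be transitive partitions such that Σ̂ weakly cart-imitates Σ via an injective map β : Σ → Σ̂, and let 𝔍 : V → 2^Σ be a map over a finite collection V of set variables. Then for every literal ℓ of any of the types x = y ∪ z, x = y \ z, x ≠ y, x ∈ y, x ∉ y, x ⊆ y ⊗ z (x, y, z variables in V): if Σ/𝔍 ⊨ ℓ then Σ̂/𝔍̄ ⊨ ℓ, where 𝔍̄ := β̄ ∘ 𝔍 and β̄ is the image-map of β. -/

import Mathlib

/-!
Since `Σ` and `Σ̂` are partitions, `⋃` is injective on sets of blocks, so the Boolean literals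
and `≠` transfer through the bijection `β`, and `∈`/`∉` are exactly condition (ii). For
`x ⊆ y ⊗ z`, take `û ∈ β σ` with `σ ∈ 𝔍 x`; every element of `σ` is a pair. Let `X` be the set
of blocks whose image meets `û`; transitivity of `⋃ Σ̂` gives `û ∈ P*(β[X])`. Since `σ` holds no
element of `P*(X)` of size `> 2`, condition (iii) makes `û` a pair and yields a pair
`{s, t} ∈ σ ∩ P*(X)`. As `Σ` is a partition, the blocks of `X` are those of `s` and `t`, which lie
in `𝔍 y` and `𝔍 z`; so `û` is covered by `⋃ β[𝔍 y] ∪ ⋃ β[𝔍 z]` and meets both parts, hence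
lies in `⋃ β[𝔍 y] ⊗ ⋃ β[𝔍 z]`.
-/

open ZFSet

/-- A partition: a collection (as a ZFC set) of pairwise disjoint nonempty sets. -/
def IsPartition (S : ZFSet) : Prop :=
  (∀ σ ∈ S, σ ≠ (∅ : ZFSet)) ∧
    ∀ σ ∈ S, ∀ τ ∈ S, σ ≠ τ → σ ∩ τ = (∅ : ZFSet)

/-- A transitive partition: a partition whose domain `⋃₀ S` is a transitive set. -/
def IsTransPartition (S : ZFSet) : Prop :=
  IsPartition S ∧ (⋃₀ S : ZFSet).IsTransitive

/-- `P*(X)`: the set of nonempty subsets of `⋃₀ X` meeting every block of `X`. -/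
def powStar (X : ZFSet) : ZFSet :=
  ZFSet.sep (fun y => y ≠ (∅ : ZFSet) ∧ ∀ σ ∈ X, y ∩ σ ≠ (∅ : ZFSet))
    (ZFSet.powerset (⋃₀ X))

/-- `P*(X)_{1,2}`: the elements of `P*(X)` of cardinality 1 or 2. -/
def powStar12 (X : ZFSet) : ZFSet :=
  ZFSet.sep (fun y => ∃ a b : ZFSet, y = insert a ({b} : ZFSet)) (powStar X)

/-- Unordered Cartesian product `S ⊗ T = {{s,t} : s ∈ S, t ∈ T}`. -/
def otimes (S T : ZFSet) : ZFSet :=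
  ZFSet.sep (fun y => ∃ s ∈ S, ∃ t ∈ T, y = insert s ({t} : ZFSet))
    (ZFSet.powerset (S ∪ T))

/-- Image of a ZFC set under an arbitrary class function (classically definable). -/
noncomputable def zimg (f : ZFSet → ZFSet) (x : ZFSet) : ZFSet :=
  @ZFSet.image f (Classical.allZFSetDefinable _) x

/-- `Sh` weakly cart-imitates `Sg` via the bijection `β`. -/
def WCartImitates (Sh Sg : ZFSet) (β : ZFSet → ZFSet) : Prop :=
  -- `β` is a bijection from the blocks of `Sg` onto the blocks of `Sh`
  (∀ σ : ZFSet, σ ∈ Sg → β σ ∈ Sh) ∧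
  (∀ σ : ZFSet, σ ∈ Sg → ∀ τ : ZFSet, τ ∈ Sg → β σ = β τ → σ = τ) ∧
  (∀ τ : ZFSet, τ ∈ Sh → ∃ σ : ZFSet, σ ∈ Sg ∧ β σ = τ) ∧
  ∀ X : ZFSet, X ⊆ Sg → ∀ σ : ZFSet, σ ∈ Sg →
    -- (i)
    (powStar (zimg β X) ∩ β σ ≠ (∅ : ZFSet) → powStar X ∩ σ ≠ (∅ : ZFSet)) ∧
    -- (ii)
    ((⋃₀ zimg β X : ZFSet) ∈ β σ ↔ (⋃₀ X : ZFSet) ∈ σ) ∧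
    -- (iii)
    (powStar12 (zimg β X) ∩ β σ ≠ (∅ : ZFSet) ↔ powStar12 X ∩ σ ≠ (∅ : ZFSet)) ∧
    ((powStar (zimg β X) \ powStar12 (zimg β X)) ∩ β σ ≠ (∅ : ZFSet) ↔
      (powStar X \ powStar12 X) ∩ σ ≠ (∅ : ZFSet))

/-- `Sh` cart-imitates `Sg` via `β`: weak cart-imitation together with the
cart-saturated condition (iv). -/
def CartImitates (Sh Sg : ZFSet) (β : ZFSet → ZFSet) : Prop :=
  WCartImitates Sh Sg β ∧
    ∀ X : ZFSet, X ⊆ Sg → powStar12 X ⊆ (⋃₀ Sg : ZFSet) →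
      powStar12 (zimg β X) ⊆ (⋃₀ zimg β Sg : ZFSet)

/-- Literals of the types `x = y ∪ z`, `x = y \ z`, `x ≠ y`, `x ∈ y`, `x ∉ y`,
`x ⊆ y ⊗ z`. -/
inductive MLSLit : Type
  | eqUnion (x y z : ℕ)
  | eqDiff (x y z : ℕ)
  | neq (x y : ℕ)
  | mem (x y : ℕ)
  | notMem (x y : ℕ)
  | subProd (x y z : ℕ)

/-- The variables occurring in a literal. -/
def MLSLit.vars : MLSLit → Finset ℕ
  | eqUnion x y z => {x, y, z}
  | eqDiff x y z => {x, y, z}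
  | neq x y => {x, y}
  | mem x y => {x, y}
  | notMem x y => {x, y}
  | subProd x y z => {x, y, z}

/-- Satisfaction of a literal by a set assignment. -/
def SatLit (M : ℕ → ZFSet) : MLSLit → Prop
  | .eqUnion x y z => M x = M y ∪ M z
  | .eqDiff x y z => M x = M y \ M z
  | .neq x y => M x ≠ M y
  | .mem x y => M x ∈ M y
  | .notMem x y => M x ∉ M y
  | .subProd x y z => M x ⊆ otimes (M y) (M z)

namespace ZFSet

theorem nonempty_iff_ne_empty {x : ZFSet} : x.Nonempty ↔ x ≠ ∅ :=
  ⟨fun ⟨a, ha⟩ h => notMem_empty a (h ▸ ha), (eq_empty_or_nonempty x).resolve_left⟩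

theorem sUnion_union (A B : ZFSet) : ⋃₀ (A ∪ B) = ⋃₀ A ∪ ⋃₀ B := by
  ext a
  simp only [mem_sUnion, mem_union]
  grind

theorem union_subset {A B C : ZFSet} (hA : A ⊆ C) (hB : B ⊆ C) : A ∪ B ⊆ C := fun _ h =>
  (mem_union.1 h).elim (@hA _) (@hB _)

theorem sUnion_mono {A B : ZFSet} (h : A ⊆ B) : ⋃₀ A ⊆ ⋃₀ B := fun _ ha =>
  let ⟨_, hσ, haσ⟩ := mem_sUnion.1 ha
  mem_sUnion_of_mem haσ (h hσ)

theorem pair_comm (a b : ZFSet) : ({a, b} : ZFSet) = {b, a} := by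
  ext
  simp only [mem_pair]
  exact or_comm

end ZFSet

section Image

variable {f : ZFSet → ZFSet} {S T A B : ZFSet}

theorem mem_zimg {x y : ZFSet} : y ∈ zimg f x ↔ ∃ z ∈ x, f z = y :=
  @ZFSet.mem_image f (Classical.allZFSetDefinable _) x y

theorem mem_zimg_of_mem {x z : ZFSet} (h : z ∈ x) : f z ∈ zimg f x :=
  mem_zimg.2 ⟨z, h, rfl⟩

theorem coe_zimg (x : ZFSet) : (zimg f x : Set ZFSet) = f '' x := by
  ext
  exact mem_zimg

theorem zimg_mono (h : A ⊆ B) : zimg f A ⊆ zimg f B := fun _ hy =>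
  let ⟨_, hz, e⟩ := mem_zimg.1 hy
  e ▸ mem_zimg_of_mem (h hz)

theorem zimg_empty : zimg f ∅ = ∅ :=
  SetLike.coe_injective (by rw [coe_zimg, coe_empty, Set.image_empty])

theorem zimg_union : zimg f (A ∪ B) = zimg f A ∪ zimg f B :=
  SetLike.coe_injective (by simp only [coe_zimg, coe_union, Set.image_union])

theorem zimg_subset (hf : Set.MapsTo f S T) (hA : A ⊆ S) : zimg f A ⊆ T := by
  rw [← coe_subset_coe, coe_zimg]
  exact (hf.mono_left hA).image_subset

theorem zimg_sdiff (hf : Set.InjOn f S) (hA : A ⊆ S) (hB : B ⊆ S) :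
    zimg f (A \ B) = zimg f A \ zimg f B := by
  ext y
  simp only [mem_sdiff, mem_zimg]
  constructor
  · rintro ⟨z, ⟨hzA, hzB⟩, rfl⟩
    refine ⟨⟨z, hzA, rfl⟩, ?_⟩
    rintro ⟨w, hwB, hwz⟩
    exact hzB (hf (hB hwB) (hA hzA) hwz ▸ hwB)
  · rintro ⟨⟨z, hzA, rfl⟩, hzB⟩
    exact ⟨z, ⟨hzA, fun h => hzB ⟨z, h, rfl⟩⟩, rfl⟩

theorem zimg_injOn (hf : Set.InjOn f S) (hA : A ⊆ S) (hB : B ⊆ S)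
    (h : zimg f A = zimg f B) : A = B := by
  apply SetLike.coe_injective
  rw [← hf.image_eq_image_iff (coe_subset_coe.2 hA) (coe_subset_coe.2 hB), ← coe_zimg,
    ← coe_zimg, h]

end Image

section PowStar

variable {X u : ZFSet}

theorem mem_powStar :
    u ∈ powStar X ↔ u ⊆ ⋃₀ X ∧ u.Nonempty ∧ ∀ σ ∈ X, (u ∩ σ).Nonempty := by
  simp only [powStar, mem_sep, mem_powerset, nonempty_iff_ne_empty]

theorem mem_powStar12 : u ∈ powStar12 X ↔ u ∈ powStar X ∧ ∃ a b : ZFSet, u = {a, b} := by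
  simp only [powStar12, mem_sep]

theorem mem_otimes {S T : ZFSet} : u ∈ otimes S T ↔ ∃ s ∈ S, ∃ t ∈ T, u = {s, t} := by
  simp only [otimes, mem_sep, mem_powerset, and_iff_right_iff_imp]
  rintro ⟨s, hs, t, ht, rfl⟩ c hc
  rcases mem_pair.1 hc with rfl | rfl
  · exact mem_union.2 (Or.inl hs)
  · exact mem_union.2 (Or.inr ht)

theorem pair_mem_otimes {a b S T : ZFSet} (hST : {a, b} ⊆ S ∪ T) (hS : a ∈ S ∨ b ∈ S)
    (hT : a ∈ T ∨ b ∈ T) : {a, b} ∈ otimes S T := by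
  have ha := mem_union.1 (hST (mem_pair.2 (Or.inl rfl)))
  have hb := mem_union.1 (hST (mem_pair.2 (Or.inr rfl)))
  rw [mem_otimes]
  rcases hS with haS | hbS <;> rcases hT with haT | hbT
  · rcases hb with hbS | hbT
    · exact ⟨b, hbS, a, haT, pair_comm _ _⟩
    · exact ⟨a, haS, b, hbT, rfl⟩
  · exact ⟨a, haS, b, hbT, rfl⟩
  · exact ⟨b, hbS, a, haT, pair_comm _ _⟩
  · rcases ha with haS | haT
    · exact ⟨a, haS, b, hbT, rfl⟩
    · exact ⟨b, hbS, a, haT, pair_comm _ _⟩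

end PowStar

namespace IsPartition

variable {S A B X Y u : ZFSet} (hS : IsPartition S)
include hS

theorem eq_of_mem_of_mem {σ τ a : ZFSet} (hσ : σ ∈ S) (hτ : τ ∈ S) (haσ : a ∈ σ)
    (haτ : a ∈ τ) : σ = τ := by
  by_contra hne
  have h := hS.2 σ hσ τ hτ hne
  exact notMem_empty a (h ▸ mem_inter.2 ⟨haσ, haτ⟩)

theorem mem_of_mem_sUnion {σ a : ZFSet} (hA : A ⊆ S) (hσ : σ ∈ S) (haσ : a ∈ σ)
    (haA : a ∈ ⋃₀ A) : σ ∈ A := by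
  obtain ⟨τ, hτ, haτ⟩ := mem_sUnion.1 haA
  rwa [hS.eq_of_mem_of_mem hσ (hA hτ) haσ haτ]

theorem subset_of_sUnion_subset (hA : A ⊆ S) (hB : B ⊆ S) (h : ⋃₀ A ⊆ ⋃₀ B) : A ⊆ B :=
  fun σ hσ =>
    let ⟨_, ha⟩ := nonempty_iff_ne_empty.2 (hS.1 σ (hA hσ))
    hS.mem_of_mem_sUnion hB (hA hσ) ha (h (mem_sUnion_of_mem ha hσ))

theorem eq_of_sUnion_eq (hA : A ⊆ S) (hB : B ⊆ S) (h : ⋃₀ A = ⋃₀ B) : A = B :=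
  le_antisymm (hS.subset_of_sUnion_subset hA hB h.le) (hS.subset_of_sUnion_subset hB hA h.ge)

theorem sUnion_sdiff (hA : A ⊆ S) (hB : B ⊆ S) : ⋃₀ (A \ B) = ⋃₀ A \ ⋃₀ B := by
  ext a
  simp only [mem_sdiff, mem_sUnion]
  constructor
  · rintro ⟨σ, ⟨hσA, hσB⟩, haσ⟩
    exact ⟨⟨σ, hσA, haσ⟩, fun hB' => hσB (hS.mem_of_mem_sUnion hB (hA hσA) haσ
      (mem_sUnion.2 hB'))⟩
  · rintro ⟨⟨σ, hσA, haσ⟩, hnB⟩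
    exact ⟨σ, ⟨hσA, fun hσB => hnB ⟨σ, hσB, haσ⟩⟩, haσ⟩

theorem subset_of_mem_powStar (hX : X ⊆ S) (hY : Y ⊆ S) (hu : u ∈ powStar X)
    (huY : u ⊆ ⋃₀ Y) : X ⊆ Y := fun ρ hρ =>
  let ⟨_, ha⟩ := (mem_powStar.1 hu).2.2 ρ hρ
  hS.mem_of_mem_sUnion hY (hX hρ) (mem_inter.1 ha).2 (huY (mem_inter.1 ha).1)

theorem exists_mem_sUnion_zimg_of_mem_powStar {f : ZFSet → ZFSet} {û a : ZFSet}
    (hX : X ⊆ S) (hY : Y ⊆ S) (hu : u ∈ powStar X) (hû : û ∈ powStar (zimg f X))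
    (ha : a ∈ u) (haY : a ∈ ⋃₀ Y) : ∃ c ∈ û, c ∈ ⋃₀ zimg f Y := by
  obtain ⟨ρ, hρX, haρ⟩ := mem_sUnion.1 ((mem_powStar.1 hu).1 ha)
  have hρY : ρ ∈ Y := hS.mem_of_mem_sUnion hY (hX hρX) haρ haY
  obtain ⟨c, hc⟩ := (mem_powStar.1 hû).2.2 (f ρ) (mem_zimg_of_mem hρX)
  exact ⟨c, (mem_inter.1 hc).1, mem_sUnion_of_mem (mem_inter.1 hc).2 (mem_zimg_of_mem hρY)⟩

end IsPartition

theorem mem_powStar_zimg_sep {f : ZFSet → ZFSet} {S T u : ZFSet} (hf : Set.SurjOn f S T)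
    (hu : u.Nonempty) (huT : u ⊆ ⋃₀ T) :
    u ∈ powStar (zimg f (S.sep fun ρ => (u ∩ f ρ).Nonempty)) := by
  refine mem_powStar.2 ⟨fun a ha => ?_, hu, fun τ hτ => ?_⟩
  · obtain ⟨τ, hτ, haτ⟩ := mem_sUnion.1 (huT ha)
    obtain ⟨ρ, hρ, rfl⟩ := hf hτ
    exact mem_sUnion_of_mem haτ (mem_zimg_of_mem (mem_sep.2 ⟨hρ, a, mem_inter.2 ⟨ha, haτ⟩⟩))
  · obtain ⟨ρ, hρ, rfl⟩ := mem_zimg.1 hτ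
    exact (mem_sep.1 hρ).2

section Literals

variable {f : ZFSet → ZFSet} {S T X Y Z : ZFSet}

theorem sUnion_zimg_eq_union (hS : IsPartition S) (hX : X ⊆ S) (hY : Y ⊆ S) (hZ : Z ⊆ S)
    (h : ⋃₀ X = ⋃₀ Y ∪ ⋃₀ Z) : ⋃₀ zimg f X = ⋃₀ zimg f Y ∪ ⋃₀ zimg f Z := by
  rw [hS.eq_of_sUnion_eq hX (union_subset hY hZ) (by rw [sUnion_union, h]), zimg_union,
    sUnion_union]

theorem sUnion_zimg_eq_sdiff (hS : IsPartition S) (hT : IsPartition T)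
    (hmaps : Set.MapsTo f S T) (hinj : Set.InjOn f S) (hX : X ⊆ S) (hY : Y ⊆ S) (hZ : Z ⊆ S)
    (h : ⋃₀ X = ⋃₀ Y \ ⋃₀ Z) : ⋃₀ zimg f X = ⋃₀ zimg f Y \ ⋃₀ zimg f Z := by
  have hYZ : Y \ Z ⊆ S := fun _ hρ => hY (mem_sdiff.1 hρ).1
  rw [hS.eq_of_sUnion_eq hX hYZ (by rw [hS.sUnion_sdiff hY hZ, h]), zimg_sdiff hinj hY hZ,
    hT.sUnion_sdiff (zimg_subset hmaps hY) (zimg_subset hmaps hZ)]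

theorem sUnion_zimg_ne (hT : IsPartition T) (hmaps : Set.MapsTo f S T) (hinj : Set.InjOn f S)
    (hX : X ⊆ S) (hY : Y ⊆ S) (h : ⋃₀ X ≠ ⋃₀ Y) : ⋃₀ zimg f X ≠ ⋃₀ zimg f Y := fun he =>
  h <| congrArg _ <| zimg_injOn hinj hX hY <|
    hT.eq_of_sUnion_eq (zimg_subset hmaps hX) (zimg_subset hmaps hY) he

end Literals

namespace WCartImitates

variable {Sh Sg : ZFSet} {β : ZFSet → ZFSet} (h : WCartImitates Sh Sg β)
include h

theorem mapsTo : Set.MapsTo β Sg Sh := h.1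

theorem injOn : Set.InjOn β Sg := fun σ hσ τ hτ e => h.2.1 σ hσ τ hτ e

theorem surjOn : Set.SurjOn β Sg Sh := fun τ hτ => h.2.2.1 τ hτ

theorem sUnion_zimg_mem_iff {X σ : ZFSet} (hX : X ⊆ Sg) (hσ : σ ∈ Sg) :
    ⋃₀ zimg β X ∈ β σ ↔ ⋃₀ X ∈ σ :=
  (h.2.2.2 X hX σ hσ).2.1

theorem empty_mem_iff {σ : ZFSet} (hσ : σ ∈ Sg) : ∅ ∈ β σ ↔ ∅ ∈ σ := by
  simpa only [zimg_empty, sUnion_empty] using h.sUnion_zimg_mem_iff (empty_subset Sg) hσ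

theorem sUnion_zimg_mem_sUnion_zimg_iff {X Y : ZFSet} (hX : X ⊆ Sg) (hY : Y ⊆ Sg) :
    ⋃₀ zimg β X ∈ ⋃₀ zimg β Y ↔ ⋃₀ X ∈ ⋃₀ Y := by
  simp only [mem_sUnion, mem_zimg]
  constructor
  · rintro ⟨_, ⟨σ, hσ, rfl⟩, hXσ⟩
    exact ⟨σ, hσ, (h.sUnion_zimg_mem_iff hX (hY hσ)).1 hXσ⟩
  · rintro ⟨σ, hσ, hXσ⟩
    exact ⟨β σ, ⟨σ, hσ, rfl⟩, (h.sUnion_zimg_mem_iff hX (hY hσ)).2 hXσ⟩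

theorem mem_powStar12_of_forall_pair {X σ û : ZFSet} (hX : X ⊆ Sg) (hσ : σ ∈ Sg)
    (hpairs : ∀ u ∈ σ, ∃ a b : ZFSet, u = {a, b}) (hûσ : û ∈ β σ)
    (hûX : û ∈ powStar (zimg β X)) : û ∈ powStar12 (zimg β X) ∧ ∃ u ∈ σ, u ∈ powStar12 X := by
  obtain ⟨-, -, hsmall, hlarge⟩ := h.2.2.2 X hX σ hσ
  have hû : û ∈ powStar12 (zimg β X) := by
    by_contra hû
    obtain ⟨u, hu⟩ := nonempty_iff_ne_empty.2 <|
      hlarge.1 (nonempty_iff_ne_empty.1 ⟨û, mem_inter.2 ⟨mem_sdiff.2 ⟨hûX, hû⟩, hûσ⟩⟩)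
    obtain ⟨hu, huσ⟩ := mem_inter.1 hu
    exact (mem_sdiff.1 hu).2 (mem_powStar12.2 ⟨(mem_sdiff.1 hu).1, hpairs u huσ⟩)
  obtain ⟨u, hu⟩ :=
    nonempty_iff_ne_empty.2 (hsmall.1 (nonempty_iff_ne_empty.1 ⟨û, mem_inter.2 ⟨hû, hûσ⟩⟩))
  exact ⟨hû, u, (mem_inter.1 hu).2, (mem_inter.1 hu).1⟩

theorem image_subset_otimes (hSg : IsPartition Sg) (hSh : (⋃₀ Sh).IsTransitive)
    {σ Y Z : ZFSet} (hσ : σ ∈ Sg) (hY : Y ⊆ Sg) (hZ : Z ⊆ Sg)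
    (hσYZ : σ ⊆ otimes (⋃₀ Y) (⋃₀ Z)) :
    β σ ⊆ otimes (⋃₀ zimg β Y) (⋃₀ zimg β Z) := by
  intro û hûσ
  have hpairs : ∀ u ∈ σ, ∃ a b : ZFSet, u = {a, b} := fun u hu =>
    let ⟨s, _, t, _, e⟩ := mem_otimes.1 (hσYZ hu)
    ⟨s, t, e⟩
  have hû : û.Nonempty := by
    refine nonempty_iff_ne_empty.2 fun hû => ?_
    obtain ⟨a, b, hab⟩ := hpairs ∅ ((h.empty_mem_iff hσ).1 (hû ▸ hûσ))
    exact nonempty_iff_ne_empty.1 (hab ▸ insert_nonempty a {b}) rfl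
  set X := Sg.sep fun ρ => (û ∩ β ρ).Nonempty
  have hX : X ⊆ Sg := sep_subset
  have hûX : û ∈ powStar (zimg β X) :=
    mem_powStar_zimg_sep h.surjOn hû (hSh.subset_of_mem (mem_sUnion_of_mem hûσ (h.mapsTo hσ)))
  obtain ⟨hû12, u, huσ, hu12⟩ := h.mem_powStar12_of_forall_pair hX hσ hpairs hûσ hûX
  obtain ⟨s, hs, t, ht, rfl⟩ := mem_otimes.1 (hσYZ huσ)
  obtain ⟨a, b, rfl⟩ := (mem_powStar12.1 hû12).2
  have huX := (mem_powStar12.1 hu12).1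
  have hXYZ : X ⊆ Y ∪ Z := by
    refine hSg.subset_of_mem_powStar hX (union_subset hY hZ) huX fun c hc => ?_
    rw [sUnion_union, mem_union]
    rcases mem_pair.1 hc with rfl | rfl
    exacts [Or.inl hs, Or.inr ht]
  have meets {W c : ZFSet} (hW : W ⊆ Sg) (hc : c ∈ ({s, t} : ZFSet)) (hcW : c ∈ ⋃₀ W) :
      a ∈ ⋃₀ zimg β W ∨ b ∈ ⋃₀ zimg β W := by
    obtain ⟨d, hd, hdW⟩ := hSg.exists_mem_sUnion_zimg_of_mem_powStar hX hW huX hûX hc hcW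
    rcases mem_pair.1 hd with rfl | rfl
    exacts [Or.inl hdW, Or.inr hdW]
  refine pair_mem_otimes ?_ (meets hY (mem_pair.2 (Or.inl rfl)) hs)
    (meets hZ (mem_pair.2 (Or.inr rfl)) ht)
  rw [← sUnion_union, ← zimg_union]
  exact (mem_powStar.1 hûX).1.trans (sUnion_mono (zimg_mono hXYZ))

theorem sUnion_zimg_subset_otimes (hSg : IsPartition Sg) (hSh : (⋃₀ Sh).IsTransitive)
    {X Y Z : ZFSet} (hX : X ⊆ Sg) (hY : Y ⊆ Sg) (hZ : Z ⊆ Sg)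
    (hXYZ : ⋃₀ X ⊆ otimes (⋃₀ Y) (⋃₀ Z)) :
    ⋃₀ zimg β X ⊆ otimes (⋃₀ zimg β Y) (⋃₀ zimg β Z) := by
  intro û hû
  obtain ⟨_, hτ, hûτ⟩ := mem_sUnion.1 hû
  obtain ⟨σ, hσ, rfl⟩ := mem_zimg.1 hτ
  exact h.image_subset_otimes hSg hSh (hX hσ) hY hZ
    (fun _ hu => hXYZ (mem_sUnion_of_mem hu hσ)) hûτ

end WCartImitates

/-- if `Σ̂` weakly cart-imitates `Σ` via `β` and `𝔍 : V → 2^Σ`, then any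
literal of the listed types satisfied by `Σ/𝔍` is satisfied by `Σ̂/𝔍̄`, where
`𝔍̄ = β̄ ∘ 𝔍` is the inherited assignment. -/
theorem wcart_imitates_satisfies_literals
    (Sg Sh : ZFSet) (hSg : IsTransPartition Sg) (hSh : IsTransPartition Sh)
    (β : ZFSet → ZFSet) (hβ : WCartImitates Sh Sg β)
    (V : Finset ℕ) (J : ℕ → ZFSet) (hJ : ∀ v ∈ V, J v ⊆ Sg) :
    ∀ ℓ : MLSLit, ℓ.vars ⊆ V →
      SatLit (fun v => (⋃₀ J v : ZFSet)) ℓ →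
      SatLit (fun v => (⋃₀ zimg β (J v) : ZFSet)) ℓ := by
  intro ℓ hℓ hsat
  cases ℓ <;> simp only [MLSLit.vars, Finset.insert_subset_iff, Finset.singleton_subset_iff] at hℓ
  case eqUnion x y z =>
    exact sUnion_zimg_eq_union hSg.1 (hJ x hℓ.1) (hJ y hℓ.2.1) (hJ z hℓ.2.2) hsat
  case eqDiff x y z =>
    exact sUnion_zimg_eq_sdiff hSg.1 hSh.1 hβ.mapsTo hβ.injOn (hJ x hℓ.1) (hJ y hℓ.2.1)
      (hJ z hℓ.2.2) hsat
  case neq x y =>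
    exact sUnion_zimg_ne hSh.1 hβ.mapsTo hβ.injOn (hJ x hℓ.1) (hJ y hℓ.2) hsat
  case mem x y =>
    exact (hβ.sUnion_zimg_mem_sUnion_zimg_iff (hJ x hℓ.1) (hJ y hℓ.2)).2 hsat
  case notMem x y =>
    exact mt (hβ.sUnion_zimg_mem_sUnion_zimg_iff (hJ x hℓ.1) (hJ y hℓ.2)).1 hsat
  case subProd x y z =>
    exact hβ.sUnion_zimg_subset_otimes hSg.1 hSh.2 (hJ x hℓ.1) (hJ y hℓ.2.1) (hJ z hℓ.2.2) hsat
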